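/- For a unit vector v in an inner product space and any x, ⟨H_k(x), v^{⊗k}⟩ = h_k(v·x), where H_k is the k-th normalized Hermite tensor and h_k the k-th normalized probabilist's Hermite polynomial. -/

import Mathlib

open MeasureTheory ProbabilityTheory

/-- The standard Gaussian measure `N(0, I_d)` on `ℝ^d`. -/
noncomputable def stdGaussian (d : ℕ) : Measure (Fin d → ℝ) :=
  Measure.pi fun _ => gaussianReal 0 1

/-- The `m`-th normalized probabilist's Hermite polynomial `h_m(t) = He_m(t)/√(m!)`. -/
noncomputable def hermiteN (m : ℕ) (t : ℝ) : ℝ :=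
  (Polynomial.aeval t (Polynomial.hermite m)) / Real.sqrt (Nat.factorial m)

/-- `c_m = E_{G ~ N(0,1)}[ReLU(G) h_m(G)]`. -/
noncomputable def reluCoeff (m : ℕ) : ℝ :=
  ∫ t, max 0 t * hermiteN m t ∂(gaussianReal 0 1)

/-- The entries of the `m`-th normalized Hermite tensor `H_m(x)` on `ℝ^d`:
`(H_m(x))_{i_1,…,i_m} = (1/√(m!)) Σ_{partitions P of [m] into singletons and pairs}`
`⊗_{{a,b} ∈ P} (−I_{i_a,i_b}) ⊗_{{c} ∈ P} x_{i_c}`.  Such partitions are encoded as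
involutions `f : Fin m → Fin m` (pairs are the 2-cycles, singletons the fixed points). -/
noncomputable def hermiteTensor (d m : ℕ) (x : Fin d → ℝ) (i : Fin m → Fin d) : ℝ :=
  (Real.sqrt (Nat.factorial m))⁻¹ *
    ∑ f ∈ Finset.univ.filter (fun f : Fin m → Fin m => ∀ a, f (f a) = a),
      ∏ a, (if f a = a then x (i a)
            else if a < f a then (if i a = i (f a) then (-1 : ℝ) else 0) else 1)

/-- The pairing `⟨H_m(x), v^{⊗m}⟩`. -/
noncomputable def hermitePairing (d m : ℕ) (x v : Fin d → ℝ) : ℝ :=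
  ∑ i : Fin m → Fin d, hermiteTensor d m x i * ∏ a, v (i a)

/-!
Expanding the pairing and summing over the index map `i` first, each involution `f` contributes
a product over its orbits: a fixed point gives `⟨v, x⟩` and a pair `{a, f a}` gives
`-∑ⱼ vⱼ² = -1`, because the Kronecker delta forces `i` to be constant on the pair. Hence the
pairing is `∑_f t^#fix(f) (-1)^#pairs(f)` at `t = ⟨v, x⟩`. This generating polynomial
satisfies `He_{n+1} = X He_n - He_n'`: an involution of `{0, …, n}` either fixes `0`, which
multiplies the weight by `X`, or pairs `0` with a fixed point of the involution induced on the
remaining points, which replaces the factor `X` of that fixed point by `-1`.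
-/

open Finset Function

theorem sum_prod_comp_eq_prod_sum_prod_fiber {ι κ D M : Type*} [Fintype ι] [Fintype κ]
    [DecidableEq κ] [Fintype D] [CommSemiring M] (ρ : ι → κ) (H : ι → D → M) :
    ∑ j : κ → D, ∏ a, H a (j (ρ a)) = ∏ r, ∑ p, ∏ a with ρ a = r, H a p := by
  rw [Fintype.prod_sum]
  refine sum_congr rfl fun j _ => ?_
  rw [← prod_fiberwise univ ρ]
  refine prod_congr rfl fun r _ => prod_congr rfl fun a ha => ?_
  rw [(mem_filter.1 ha).2]

namespace Function.Involutive

variable {ι : Type*} [LinearOrder ι] {f : ι → ι}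

def orbitMin (hf : Involutive f) (a : ι) : {r // r ≤ f r} :=
  ⟨min a (f a), by
    rcases le_total a (f a) with h | h
    · rwa [min_eq_left h]
    · rwa [min_eq_right h, hf]⟩

theorem orbitMin_coe (hf : Involutive f) (r : {r // r ≤ f r}) : hf.orbitMin r = r :=
  Subtype.ext (min_eq_left r.2)

theorem orbitMin_apply (hf : Involutive f) (a : ι) : hf.orbitMin (f a) = hf.orbitMin a :=
  Subtype.ext (by simp only [orbitMin, hf a, min_comm])

theorem orbitMin_eq_iff (hf : Involutive f) {a : ι} {r : {r // r ≤ f r}} :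
    hf.orbitMin a = r ↔ a = r ∨ a = f r := by
  constructor
  · rintro rfl
    rcases min_choice a (f a) with h | h
    · exact Or.inl (by simp [orbitMin, h])
    · exact Or.inr (by simp [orbitMin, h, hf a])
  · rintro (rfl | rfl)
    · exact hf.orbitMin_coe r
    · rw [hf.orbitMin_apply, hf.orbitMin_coe]

theorem filter_orbitMin_eq [Fintype ι] (hf : Involutive f) (r : {r // r ≤ f r}) :
    ({a | hf.orbitMin a = r} : Finset ι) = {(r : ι), f r} := by
  ext a
  simp [hf.orbitMin_eq_iff]

theorem comp_orbitMin_of_apply_eq {D : Type*} (hf : Involutive f) {i : ι → D}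
    (hi : ∀ a, a < f a → i a = i (f a)) :
    (fun r : {r // r ≤ f r} => i r) ∘ hf.orbitMin = i := by
  funext a
  rcases lt_or_ge (f a) a with h | h
  · simpa [orbitMin, min_eq_right h.le, hf a] using hi (f a) (by rwa [hf a])
  · simp [orbitMin, min_eq_left h]

end Function.Involutive

section Weight

variable {ι R : Type*} [LinearOrder ι] [CommRing R]

def involutionFactor (t : R) (f : ι → ι) (a : ι) : R :=
  if f a = a then t else if a < f a then -1 else 1

def involutionWeight [Fintype ι] (t : R) (f : ι → ι) : R :=
  ∏ a, involutionFactor t f a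

theorem sum_prod_involution_eq_involutionWeight [Fintype ι] {D : Type*} [Fintype D]
    [DecidableEq D] {f : ι → ι} (hf : Involutive f) (x v : D → R) (hv : ∑ p, v p ^ 2 = 1) :
    ∑ i : ι → D, ∏ a, (if f a = a then x (i a)
        else if a < f a then (if i a = i (f a) then -1 else 0) else 1) * v (i a) =
      involutionWeight (∑ p, v p * x p) f := by
  set H : ι → D → R := fun a p => (if f a = a then x p else if a < f a then -1 else 1) * v p
  have hpair (r : {r // r ≤ f r}) :
      ∑ p, ∏ a ∈ {(r : ι), f r}, H a p =
        ∏ a ∈ {(r : ι), f r}, involutionFactor (∑ p, v p * x p) f a := by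
    by_cases hr : f r = r
    · simp [hr, H, involutionFactor, mul_comm]
    · have hlt : (r : ι) < f r := lt_of_le_of_ne r.2 (Ne.symm hr)
      simp only [prod_pair (Ne.symm hr)]
      simp [H, involutionFactor, hr, Ne.symm hr, hlt, hf r, hlt.not_gt, ← sq, hv]
  calc _ = ∑ j : {r // r ≤ f r} → D, ∏ a, H a (j (hf.orbitMin a)) := by
        have hsurj : Surjective hf.orbitMin := fun r => ⟨r, hf.orbitMin_coe r⟩
        refine (Fintype.sum_of_injective (fun j => j ∘ hf.orbitMin)
          hsurj.injective_comp_right _ _ ?_ ?_).symm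
        · intro i hi
          obtain ⟨a, hlt, hne⟩ : ∃ a, a < f a ∧ i a ≠ i (f a) := by
            by_contra! hconst
            exact hi ⟨fun r => i r, hf.comp_orbitMin_of_apply_eq hconst⟩
          exact prod_eq_zero (mem_univ a) (by simp [hlt.ne', hlt, hne])
        · intro j
          refine prod_congr rfl fun a _ => ?_
          simp [H, hf.orbitMin_apply]
    _ = ∏ r : {r // r ≤ f r}, ∑ p, ∏ a with hf.orbitMin a = r, H a p :=
        sum_prod_comp_eq_prod_sum_prod_fiber _ _
    _ = ∏ r : {r // r ≤ f r}, ∏ a with hf.orbitMin a = r,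
          involutionFactor (∑ p, v p * x p) f a := by
        simp only [hf.filter_orbitMin_eq, hpair]
    _ = _ := prod_fiberwise _ _ _

end Weight

section Involutions

variable {n : ℕ}

def involutions (n : ℕ) : Finset (Fin n → Fin n) :=
  univ.filter fun f => ∀ a, f (f a) = a

theorem mem_involutions {f : Fin n → Fin n} : f ∈ involutions n ↔ Involutive f := by
  simp [involutions, Involutive]

/-- `involutionCons 0 g` fixes the new point `0`; `involutionCons j.succ g` pairs it with
`j.succ`, and is an involution when `j` is a fixed point of `g`. `involutionTail` inverts this,
sending the partner of `0` back to a fixed point. -/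
def involutionCons (p : Fin (n + 1)) (g : Fin n → Fin n) : Fin (n + 1) → Fin (n + 1) :=
  Fin.cons p fun b => if p = b.succ then 0 else (g b).succ

def involutionTail (f : Fin (n + 1) → Fin (n + 1)) (b : Fin n) : Fin n :=
  if h : f b.succ = 0 then b else (f b.succ).pred h

@[simp] theorem involutionCons_zero (p : Fin (n + 1)) (g : Fin n → Fin n) :
    involutionCons p g 0 = p := rfl

@[simp] theorem involutionCons_succ (p : Fin (n + 1)) (g : Fin n → Fin n) (b : Fin n) :
    involutionCons p g b.succ = if p = b.succ then 0 else (g b).succ := rfl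

theorem involutive_involutionCons {p : Fin (n + 1)} {g : Fin n → Fin n} (hg : Involutive g)
    (hp : ∀ j, p = j.succ → g j = j) : Involutive (involutionCons p g) := by
  intro a
  cases a using Fin.cases with
  | zero => cases p using Fin.cases <;> simp
  | succ b =>
    by_cases hb : p = b.succ
    · simp [hb]
    · have : p ≠ (g b).succ := fun h => hb (by rw [h, ← hp _ h, hg])
      simp [hb, this, hg b]

theorem involutive_involutionTail {f : Fin (n + 1) → Fin (n + 1)} (hf : Involutive f) :
    Involutive (involutionTail f) := by
  intro b
  by_cases hb : f b.succ = 0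
  · simp [involutionTail, hb]
  · simp [involutionTail, hb, hf b.succ]

theorem involutionTail_apply_of_eq_succ {f : Fin (n + 1) → Fin (n + 1)} (hf : Involutive f)
    {j : Fin n} (hj : f 0 = j.succ) : involutionTail f j = j := by
  simp [involutionTail, ← hj, hf 0]

theorem involutionTail_involutionCons {p : Fin (n + 1)} {g : Fin n → Fin n}
    (hp : ∀ j, p = j.succ → g j = j) : involutionTail (involutionCons p g) = g := by
  funext b
  by_cases hb : p = b.succ
  · simp [involutionTail, hb, hp b hb]
  · simp [involutionTail, hb]

theorem involutionCons_involutionTail {f : Fin (n + 1) → Fin (n + 1)} (hf : Involutive f) :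
    involutionCons (f 0) (involutionTail f) = f := by
  funext a
  cases a using Fin.cases with
  | zero => rfl
  | succ b =>
    by_cases hb : f 0 = b.succ
    · rw [involutionCons_succ, if_pos hb, ← hb, hf 0]
    · have : f b.succ ≠ 0 := fun h => hb (by rw [← h, hf])
      simp [involutionTail, hb, this]

theorem sum_involutions_succ {M : Type*} [AddCommMonoid M]
    (F : (Fin (n + 1) → Fin (n + 1)) → M) :
    ∑ f ∈ involutions (n + 1), F f = ∑ g ∈ involutions n,
      (F (involutionCons 0 g) + ∑ j with g j = j, F (involutionCons j.succ g)) := by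
  let admissible (g : Fin n → Fin n) : Finset (Fin (n + 1)) := {p | ∀ j, p = j.succ → g j = j}
  have hsplit (g : Fin n → Fin n) : ∑ p ∈ admissible g, F (involutionCons p g) =
      F (involutionCons 0 g) + ∑ j with g j = j, F (involutionCons j.succ g) := by
    simp [admissible, sum_filter, Fin.sum_univ_succ, Fin.succ_ne_zero, eq_comm]
  simp_rw [← hsplit]
  rw [← sum_finset_product {q | q.1 ∈ involutions n ∧ q.2 ∈ admissible q.1} _ _ (by simp)
    (f := fun q => F (involutionCons q.2 q.1))]
  refine sum_nbij' (fun f => (involutionTail f, f 0)) (fun q => involutionCons q.2 q.1)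
    ?_ ?_ ?_ ?_ ?_
  · intro f hf
    have hf := mem_involutions.1 hf
    simpa [admissible, mem_involutions] using ⟨involutive_involutionTail hf,
      fun j hj => involutionTail_apply_of_eq_succ hf hj⟩
  · rintro ⟨g, p⟩ hq
    simp only [admissible, mem_filter, mem_univ, true_and, mem_involutions] at hq
    exact mem_involutions.2 (involutive_involutionCons hq.1 hq.2)
  · intro f hf
    exact involutionCons_involutionTail (mem_involutions.1 hf)
  · rintro ⟨g, p⟩ hq
    simp only [admissible, mem_filter, mem_univ, true_and] at hq
    simp [involutionTail_involutionCons hq.2]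
  · intro f hf
    rw [involutionCons_involutionTail (mem_involutions.1 hf)]

open Polynomial in
theorem aeval_involutionWeight {ι R A : Type*} [LinearOrder ι] [Fintype ι] [CommRing R]
    [CommRing A] [Algebra R A] (t : A) (f : ι → ι) :
    aeval t (involutionWeight (X : R[X]) f) = involutionWeight t f := by
  rw [involutionWeight, map_prod]
  refine prod_congr rfl fun a _ => ?_
  unfold involutionFactor
  split_ifs <;> simp

open Polynomial in
theorem derivative_involutionWeight {ι R : Type*} [LinearOrder ι] [Fintype ι] [CommRing R]
    (g : ι → ι) : derivative (involutionWeight (X : R[X]) g) =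
      ∑ j with g j = j, ∏ b ∈ univ.erase j, involutionFactor X g b := by
  rw [involutionWeight, derivative_prod_finset, sum_filter]
  refine sum_congr rfl fun j _ => ?_
  unfold involutionFactor
  split_ifs <;> simp

variable {R : Type*} [CommRing R]

theorem involutionWeight_involutionCons_zero (t : R) (g : Fin n → Fin n) :
    involutionWeight t (involutionCons 0 g) = t * involutionWeight t g := by
  simp [involutionWeight, involutionFactor, Fin.prod_univ_succ, (Fin.succ_ne_zero _).symm]

theorem involutionWeight_involutionCons_succ (t : R) (g : Fin n → Fin n) (j : Fin n) :
    involutionWeight t (involutionCons j.succ g) =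
      -∏ b ∈ univ.erase j, involutionFactor t g b := by
  rw [involutionWeight, Fin.prod_univ_succ, ← mul_prod_erase univ _ (mem_univ j)]
  have hrest : ∀ b ∈ univ.erase j, involutionFactor t (involutionCons j.succ g) b.succ =
      involutionFactor t g b := by
    intro b hb
    simp [involutionFactor, (ne_of_mem_erase hb).symm]
  have hzero : involutionFactor t (involutionCons j.succ g) 0 = -1 := by
    simp [involutionFactor, Fin.succ_ne_zero, Fin.succ_pos]
  have hpartner : involutionFactor t (involutionCons j.succ g) j.succ = 1 := by
    simp [involutionFactor, (Fin.succ_ne_zero j).symm, (Fin.succ_pos j).not_gt]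
  rw [prod_congr rfl hrest, hzero, hpartner, neg_one_mul, one_mul]

open Polynomial in
theorem hermite_eq_sum_involutionWeight (n : ℕ) :
    hermite n = ∑ f ∈ involutions n, involutionWeight (X : ℤ[X]) f := by
  induction n with
  | zero => simp [involutions, involutionWeight]
  | succ n ih =>
    rw [hermite_succ, ih, sum_involutions_succ, mul_sum, map_sum, ← sum_sub_distrib]
    refine sum_congr rfl fun g _ => ?_
    rw [involutionWeight_involutionCons_zero, derivative_involutionWeight, sub_eq_add_neg,
      ← sum_neg_distrib]
    congr 1
    exact sum_congr rfl fun j _ => (involutionWeight_involutionCons_succ X g j).symm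

end Involutions

theorem hermitePairing_eq_sum_involutions (d m : ℕ) (x v : Fin d → ℝ) :
    hermitePairing d m x v = (Real.sqrt (Nat.factorial m))⁻¹ * ∑ f ∈ involutions m,
      ∑ i : Fin m → Fin d, ∏ a, (if f a = a then x (i a)
        else if a < f a then (if i a = i (f a) then -1 else 0) else 1) * v (i a) := by
  simp only [hermitePairing, hermiteTensor, mul_assoc, sum_mul, prod_mul_distrib]
  rw [← mul_sum, sum_comm]
  rfl

/-- For a unit vector `v` and any `x`: `⟨H_k(x), v^{⊗k}⟩ = h_k(v·x)`. -/
theorem hermite_tensor_pairing_unit (d k : ℕ) (v x : Fin d → ℝ) (hv : ∑ j, v j ^ 2 = 1) :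
    hermitePairing d k x v = hermiteN k (∑ j, v j * x j) := by
  rw [hermitePairing_eq_sum_involutions, hermiteN, hermite_eq_sum_involutionWeight, map_sum,
    div_eq_inv_mul]
  congr 1
  refine sum_congr rfl fun f hf => ?_
  rw [sum_prod_involution_eq_involutionWeight (mem_involutions.1 hf) x v hv, aeval_involutionWeight]
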